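/- arXiv:1309.2779 — 2 statements merged into one kernel-verified Lean document; each statement's English description precedes it below -/
import Mathlib

section
/- If (W_1, W_2) ∼ Dirichlet(n_1 + m_1, n_2 + m_2) is independent of independent random variables X_1 ∼ Beta(n_1, m_1) and X_2 ∼ Beta(n_2, m_2), then W_1 X_1 + W_2 X_2 ∼ Beta(n_1 + n_2, m_1 + m_2). In particular, for W_1 ∼ Beta(n_1+m_1, n_2+m_2) independent of X_1, X_2, the random variable W_1 X_1 + (1 − W_1) X_2 has the Beta(n_1+n_2, m_1+m_2) distribution. -/
/-!
Method of moments. All three variables live in `[0, 1]`, so `T = W X₁ + (1 - W) X₂` does too, and a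
law on `[0, 1]` is determined by its moments (Weierstrass). Expanding `T ^ k` binomially and using
independence, the `k`-th moment of `T` is a sum of products of Beta moments, which are ratios of
rising factorials `(a)_i (b)_j / (a + b)_{i + j}`. The numerator of the moment of `W` cancels the
denominators of the moments of `X₁` and `X₂`, and the Chu–Vandermonde identity for rising factorials
sums the remaining terms to `(n₁ + n₂)_k / (n₁ + n₂ + m₁ + m₂)_k`, the `k`-th moment of
`Beta(n₁ + n₂, m₁ + m₂)`.
-/

open MeasureTheory ProbabilityTheory Real Set

noncomputable def betaMeasure' (n m : ℝ) : Measure ℝ :=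
  volume.withDensity fun x => ENNReal.ofReal
    (Set.indicator (Set.Ioo 0 1)
      (fun x => x ^ (n - 1) * (1 - x) ^ (m - 1) /
        (Real.Gamma n * Real.Gamma m / Real.Gamma (n + m))) x)

open Polynomial

namespace Polynomial

theorem descPochhammer_smeval_eq_eval {R : Type*} [CommRing R] (k : ℕ) (r : R) :
    (descPochhammer ℤ k).smeval r = (descPochhammer R k).eval r := by
  rw [← aeval_eq_smeval, ← eval_map_algebraMap, descPochhammer_map]

open Finset in
/-- Reduced to Mathlib's Chu–Vandermonde identity for falling factorials, since the rising
factorial at `x` is `(-1) ^ k` times the falling factorial at `-x`. -/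
theorem ascPochhammer_eval_add {R : Type*} [CommRing R] (k : ℕ) (x y : R) :
    (ascPochhammer R k).eval (x + y) = ∑ ij ∈ antidiagonal k,
      k.choose ij.1 * ((ascPochhammer R ij.1).eval x * (ascPochhammer R ij.2).eval y) := by
  have h := Ring.descPochhammer_smeval_add k (Commute.all (-x) (-y))
  simp only [descPochhammer_smeval_eq_eval] at h
  rw [← neg_neg (x + y), ascPochhammer_eval_neg_eq_descPochhammer, neg_add, h, mul_sum]
  refine sum_congr rfl fun ij hij => ?_
  rw [← mem_antidiagonal.mp hij, ← neg_neg x, ← neg_neg y,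
    ascPochhammer_eval_neg_eq_descPochhammer, ascPochhammer_eval_neg_eq_descPochhammer,
    neg_neg, neg_neg]
  ring

end Polynomial

theorem Real.Gamma_add_nat_eq_mul_ascPochhammer {x : ℝ} (hx : ∀ n : ℕ, x + n ≠ 0) (k : ℕ) :
    Gamma (x + k) = Gamma x * (ascPochhammer ℝ k).eval x := by
  induction k with
  | zero => simp
  | succ k ih =>
    rw [Nat.cast_succ, ← add_assoc, Gamma_add_one (hx k), ih, ascPochhammer_succ_eval]
    ring

namespace ProbabilityTheory

theorem betaMeasure'_eq_betaMeasure (a b : ℝ) : betaMeasure' a b = betaMeasure a b := by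
  refine congrArg volume.withDensity (funext fun x => congrArg ENNReal.ofReal ?_)
  by_cases hx : x ∈ Ioo (0 : ℝ) 1
  · rw [indicator_of_mem hx, betaPDFReal, if_pos (show 0 < x ∧ x < 1 from hx), beta]
    ring
  · rw [indicator_of_notMem hx, betaPDFReal, if_neg (show ¬(0 < x ∧ x < 1) from hx)]

section Beta

variable {a b : ℝ}

theorem ae_mem_Icc_betaMeasure : ∀ᵐ x ∂betaMeasure a b, x ∈ Icc 0 1 := by
  have h : betaMeasure a b (Ioo 0 1)ᶜ = 0 := by
    rw [betaMeasure, withDensity_apply _ measurableSet_Ioo.compl]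
    refine setLIntegral_eq_zero measurableSet_Ioo.compl fun x hx => ?_
    rw [betaPDF, betaPDFReal, if_neg (show ¬(0 < x ∧ x < 1) from hx), ENNReal.ofReal_zero]
    rfl
  exact (measure_eq_zero_iff_ae_notMem.mp h).mono fun _ hx => Ioo_subset_Icc_self (not_not.mp hx)

theorem betaPDFReal_nonneg (ha : 0 < a) (hb : 0 < b) (x : ℝ) : 0 ≤ betaPDFReal a b x := by
  by_cases hx : 0 < x ∧ x < 1
  · exact (betaPDFReal_pos hx.1 hx.2 ha hb).le
  · rw [betaPDFReal, if_neg hx]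

theorem integral_betaPDFReal (ha : 0 < a) (hb : 0 < b) : ∫ x, betaPDFReal a b x = 1 := by
  rw [integral_eq_lintegral_of_nonneg_ae (ae_of_all _ (betaPDFReal_nonneg ha hb))
    (measurable_betaPDFReal a b).aestronglyMeasurable]
  simp [← betaPDF.eq_def, lintegral_betaPDF_eq_one ha hb]

theorem integral_betaMeasure (ha : 0 < a) (hb : 0 < b) (f : ℝ → ℝ) :
    ∫ x, f x ∂betaMeasure a b = ∫ x, betaPDFReal a b x * f x := by
  rw [betaMeasure, integral_withDensity_eq_integral_toReal_smul (f := betaPDF a b)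
    (measurable_betaPDFReal a b).ennreal_ofReal (ae_of_all _ fun _ => ENNReal.ofReal_lt_top)]
  simp only [betaPDF, ENNReal.toReal_ofReal (betaPDFReal_nonneg ha hb _), smul_eq_mul]

theorem betaPDFReal_mul_pow_mul_pow (ha : 0 < a) (hb : 0 < b) (i j : ℕ) (x : ℝ) :
    betaPDFReal a b x * (x ^ i * (1 - x) ^ j) =
      beta (a + i) (b + j) / beta a b * betaPDFReal (a + i) (b + j) x := by
  unfold betaPDFReal
  split_ifs with hx
  · have := beta_pos ha hb
    have := beta_pos (α := a + i) (β := b + j) (by positivity) (by positivity)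
    rw [add_sub_right_comm a, add_sub_right_comm b, rpow_add hx.1, rpow_add (sub_pos.mpr hx.2),
      rpow_natCast, rpow_natCast]
    field_simp
  · simp

theorem beta_add_nat_div_beta (ha : 0 < a) (hb : 0 < b) (i j : ℕ) :
    beta (a + i) (b + j) / beta a b = (ascPochhammer ℝ i).eval a * (ascPochhammer ℝ j).eval b /
      (ascPochhammer ℝ (i + j)).eval (a + b) := by
  have hab : a + i + (b + j) = a + b + ↑(i + j) := by push_cast; ring
  simp only [beta, hab, Gamma_add_nat_eq_mul_ascPochhammer (x := a) fun _ => by positivity,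
    Gamma_add_nat_eq_mul_ascPochhammer (x := b) fun _ => by positivity,
    Gamma_add_nat_eq_mul_ascPochhammer (x := a + b) fun _ => by positivity]
  have := Gamma_pos_of_pos ha
  have := Gamma_pos_of_pos hb
  have := Gamma_pos_of_pos (add_pos ha hb)
  have := ascPochhammer_pos (i + j) (a + b) (add_pos ha hb)
  field_simp

theorem integral_pow_mul_one_sub_pow_betaMeasure (ha : 0 < a) (hb : 0 < b) (i j : ℕ) :
    ∫ x, x ^ i * (1 - x) ^ j ∂betaMeasure a b =
      (ascPochhammer ℝ i).eval a * (ascPochhammer ℝ j).eval b /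
        (ascPochhammer ℝ (i + j)).eval (a + b) := by
  simp_rw [integral_betaMeasure ha hb, betaPDFReal_mul_pow_mul_pow ha hb, integral_const_mul,
    integral_betaPDFReal (a := a + i) (b := b + j) (by positivity) (by positivity), mul_one,
    beta_add_nat_div_beta ha hb]

theorem integral_pow_betaMeasure (ha : 0 < a) (hb : 0 < b) (i : ℕ) :
    ∫ x, x ^ i ∂betaMeasure a b =
      (ascPochhammer ℝ i).eval a / (ascPochhammer ℝ i).eval (a + b) := by
  simpa using integral_pow_mul_one_sub_pow_betaMeasure ha hb i 0

end Beta

end ProbabilityTheory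

namespace MeasureTheory

section Moments

variable {μ ν : Measure ℝ} {a b : ℝ}

theorem integrable_of_ae_mem_Icc [IsFiniteMeasure μ] (hμ : ∀ᵐ x ∂μ, x ∈ Icc a b) {g : ℝ → ℝ}
    (hg : ContinuousOn g (Icc a b)) : Integrable g μ := by
  rw [← Measure.restrict_eq_self_of_ae_mem hμ]
  exact hg.integrableOn_compact isCompact_Icc

theorem integral_eval_eq_of_integral_pow_eq [IsFiniteMeasure μ] [IsFiniteMeasure ν]
    (hμ : ∀ᵐ x ∂μ, x ∈ Icc a b) (hν : ∀ᵐ x ∂ν, x ∈ Icc a b)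
    (h : ∀ k : ℕ, ∫ x, x ^ k ∂μ = ∫ x, x ^ k ∂ν) (p : ℝ[X]) :
    ∫ x, p.eval x ∂μ = ∫ x, p.eval x ∂ν := by
  have hint : ∀ {ρ : Measure ℝ} [IsFiniteMeasure ρ], (∀ᵐ x ∂ρ, x ∈ Icc a b) →
      ∀ i, Integrable (fun x => p.coeff i * x ^ i) ρ := fun hρ _ =>
    integrable_of_ae_mem_Icc hρ (by fun_prop)
  simp_rw [eval_eq_sum_range, integral_finsetSum _ fun i _ => hint hμ i,
    integral_finsetSum _ fun i _ => hint hν i, integral_const_mul, h]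

theorem abs_integral_sub_integral_le [IsProbabilityMeasure μ] (hμ : ∀ᵐ x ∂μ, x ∈ Icc a b)
    {f g : ℝ → ℝ} (hf : ContinuousOn f (Icc a b)) (hg : ContinuousOn g (Icc a b)) {ε : ℝ}
    (hfg : ∀ x ∈ Icc a b, |f x - g x| ≤ ε) :
    |∫ x, f x ∂μ - ∫ x, g x ∂μ| ≤ ε := by
  rw [← integral_sub (integrable_of_ae_mem_Icc hμ hf) (integrable_of_ae_mem_Icc hμ hg)]
  simpa using norm_integral_le_of_norm_le_const (f := fun x => f x - g x) (hμ.mono hfg)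

theorem ext_of_integral_pow_eq [IsProbabilityMeasure μ] [IsProbabilityMeasure ν]
    (hμ : ∀ᵐ x ∂μ, x ∈ Icc a b) (hν : ∀ᵐ x ∂ν, x ∈ Icc a b)
    (h : ∀ k : ℕ, ∫ x, x ^ k ∂μ = ∫ x, x ^ k ∂ν) : μ = ν := by
  refine ext_of_forall_integral_eq_of_IsFiniteMeasure fun g => eq_of_forall_dist_le fun ε hε => ?_
  have hg : ContinuousOn g (Icc a b) := g.continuous.continuousOn
  obtain ⟨p, hp⟩ := exists_polynomial_near_of_continuousOn a b g hg (ε / 2) (half_pos hε)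
  have hgp : ∀ x ∈ Icc a b, |g x - p.eval x| ≤ ε / 2 := fun x hx => by
    rw [abs_sub_comm]
    exact (hp x hx).le
  have hp_cont : ContinuousOn (fun x => p.eval x) (Icc a b) := p.continuous.continuousOn
  calc dist (∫ x, g x ∂μ) (∫ x, g x ∂ν)
      = |(∫ x, g x ∂μ - ∫ x, p.eval x ∂μ) - (∫ x, g x ∂ν - ∫ x, p.eval x ∂ν)| := by
        rw [integral_eval_eq_of_integral_pow_eq hμ hν h, dist_eq, sub_sub_sub_cancel_right]
    _ ≤ ε / 2 + ε / 2 := (abs_sub _ _).trans (add_le_add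
        (abs_integral_sub_integral_le hμ hg hp_cont hgp)
        (abs_integral_sub_integral_le hν hg hp_cont hgp))
    _ = ε := add_halves ε

end Moments

end MeasureTheory

namespace ProbabilityTheory

section Independence

variable {Ω β : Type*} [MeasurableSpace Ω] [MeasurableSpace β] {μ : Measure Ω} {X Y Z : Ω → β}

theorem iIndepFun.integral_comp_mul_comp_mul_comp (h : iIndepFun ![X, Y, Z] μ)
    (hX : AEMeasurable X μ) (hY : AEMeasurable Y μ) (hZ : AEMeasurable Z μ) {f g k : β → ℝ}
    (hf : AEStronglyMeasurable f (μ.map X)) (hg : AEStronglyMeasurable g (μ.map Y))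
    (hk : AEStronglyMeasurable k (μ.map Z)) :
    ∫ ω, f (X ω) * g (Y ω) * k (Z ω) ∂μ =
      (∫ x, f x ∂μ.map X) * (∫ y, g y ∂μ.map Y) * ∫ z, k z ∂μ.map Z := by
  have := h.integral_fun_prod_comp (f := ![f, g, k])
    (fun i => by fin_cases i <;> assumption) (fun i => by fin_cases i <;> assumption)
  simp only [Fin.prod_univ_three, Matrix.cons_val] at this
  rw [this, integral_map hX hf, integral_map hY hg, integral_map hZ hk]

theorem iIndepFun.integrable_comp_mul_comp_mul_comp (h : iIndepFun ![X, Y, Z] μ)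
    (hX : Measurable X) (hY : Measurable Y) (hZ : Measurable Z) {f g k : β → ℝ}
    (hfm : Measurable f) (hgm : Measurable g) (hkm : Measurable k)
    (hf : Integrable f (μ.map X)) (hg : Integrable g (μ.map Y)) (hk : Integrable k (μ.map Z)) :
    Integrable (fun ω => f (X ω) * g (Y ω) * k (Z ω)) μ := by
  have hmeas : ∀ i, Measurable (![X, Y, Z] i) := fun i => by fin_cases i <;> assumption
  have hXY : IndepFun (fun ω => f (X ω)) (fun ω => g (Y ω)) μ :=
    (h.indepFun (i := 0) (j := 1) (by decide)).comp hfm hgm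
  have hXY_Z : IndepFun (fun ω => f (X ω) * g (Y ω)) (fun ω => k (Z ω)) μ :=
    (h.indepFun_prodMk hmeas 0 1 2 (by decide) (by decide)).comp
      ((hfm.comp measurable_fst).mul (hgm.comp measurable_snd)) hkm
  exact hXY_Z.integrable_mul (hXY.integrable_mul (hf.comp_measurable hX) (hg.comp_measurable hY))
    (hk.comp_measurable hZ)

end Independence

open Finset

theorem integral_mul_add_one_sub_mul_pow {Ω : Type*} [MeasurableSpace Ω] {μ : Measure Ω}
    {W X Y : Ω → ℝ} (h : iIndepFun ![W, X, Y] μ)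
    (hW : Measurable W) (hX : Measurable X) (hY : Measurable Y) {a b : ℝ}
    (hWab : ∀ᵐ x ∂μ.map W, x ∈ Icc a b) (hXab : ∀ᵐ x ∂μ.map X, x ∈ Icc a b)
    (hYab : ∀ᵐ x ∂μ.map Y, x ∈ Icc a b) (k : ℕ) :
    ∫ ω, (W ω * X ω + (1 - W ω) * Y ω) ^ k ∂μ =
      ∑ ij ∈ antidiagonal k, k.choose ij.1 * ((∫ w, w ^ ij.1 * (1 - w) ^ ij.2 ∂μ.map W) *
        (∫ x, x ^ ij.1 ∂μ.map X) * ∫ y, y ^ ij.2 ∂μ.map Y) := by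
  have := h.isProbabilityMeasure
  have hint : ∀ {V : Ω → ℝ} {p : ℝ → ℝ}, (∀ᵐ x ∂μ.map V, x ∈ Icc a b) → Continuous p →
      Integrable p (μ.map V) := fun hV hp => integrable_of_ae_mem_Icc hV hp.continuousOn
  have hterm_int : ∀ i j : ℕ,
      Integrable (fun ω => (W ω * X ω) ^ i * ((1 - W ω) * Y ω) ^ j) μ := by
    intro i j
    refine (h.integrable_comp_mul_comp_mul_comp (f := fun w => w ^ i * (1 - w) ^ j)
      (g := (· ^ i)) (k := (· ^ j)) hW hX hY (by fun_prop) (by fun_prop) (by fun_prop)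
      (hint hWab (by fun_prop)) (hint hXab (by fun_prop)) (hint hYab (by fun_prop))).congr
      (ae_of_all _ fun ω => ?_)
    simp only [mul_pow]
    ring
  have hterm : ∀ i j : ℕ, ∫ ω, (W ω * X ω) ^ i * ((1 - W ω) * Y ω) ^ j ∂μ =
      (∫ w, w ^ i * (1 - w) ^ j ∂μ.map W) * (∫ x, x ^ i ∂μ.map X) * ∫ y, y ^ j ∂μ.map Y := by
    intro i j
    rw [← h.integral_comp_mul_comp_mul_comp (f := fun w => w ^ i * (1 - w) ^ j) (g := (· ^ i))
      (k := (· ^ j)) hW.aemeasurable hX.aemeasurable hY.aemeasurable (by fun_prop) (by fun_prop)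
      (by fun_prop)]
    exact integral_congr_ae (ae_of_all _ fun ω => by simp only [mul_pow]; ring)
  simp_rw [fun x y : ℝ => (Commute.all x y).add_pow', nsmul_eq_mul]
  rw [integral_finsetSum _ fun ij _ => (hterm_int ij.1 ij.2).const_mul _]
  exact sum_congr rfl fun ij _ => by rw [integral_const_mul, hterm]

theorem integral_pow_betaMeasure_add_eq_sum {n₁ m₁ n₂ m₂ : ℝ}
    (hn₁ : 0 < n₁) (hm₁ : 0 < m₁) (hn₂ : 0 < n₂) (hm₂ : 0 < m₂) (k : ℕ) :
    ∫ x, x ^ k ∂betaMeasure (n₁ + n₂) (m₁ + m₂) =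
      ∑ ij ∈ antidiagonal k, k.choose ij.1 *
        ((∫ w, w ^ ij.1 * (1 - w) ^ ij.2 ∂betaMeasure (n₁ + m₁) (n₂ + m₂)) *
          (∫ x, x ^ ij.1 ∂betaMeasure n₁ m₁) * ∫ y, y ^ ij.2 ∂betaMeasure n₂ m₂) := by
  have hA : 0 < n₁ + m₁ := add_pos hn₁ hm₁
  have hB : 0 < n₂ + m₂ := add_pos hn₂ hm₂
  rw [integral_pow_betaMeasure (add_pos hn₁ hn₂) (add_pos hm₁ hm₂), ascPochhammer_eval_add,
    sum_div]
  refine sum_congr rfl fun ij hij => ?_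
  rw [integral_pow_mul_one_sub_pow_betaMeasure hA hB, integral_pow_betaMeasure hn₁ hm₁,
    integral_pow_betaMeasure hn₂ hm₂, mem_antidiagonal.mp hij,
    show n₁ + m₁ + (n₂ + m₂) = n₁ + n₂ + (m₁ + m₂) by ring]
  have := ascPochhammer_pos ij.1 _ hA
  have := ascPochhammer_pos ij.2 _ hB
  have := ascPochhammer_pos k _ (add_pos (add_pos hn₁ hn₂) (add_pos hm₁ hm₂))
  field_simp

end ProbabilityTheory

theorem rwa_beta_two {Ω : Type*} [MeasurableSpace Ω] (μ : Measure Ω)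
    [IsProbabilityMeasure μ] (n₁ m₁ n₂ m₂ : ℝ)
    (hn₁ : 0 < n₁) (hm₁ : 0 < m₁) (hn₂ : 0 < n₂) (hm₂ : 0 < m₂)
    (W X₁ X₂ : Ω → ℝ) (hWm : Measurable W) (hX₁m : Measurable X₁)
    (hX₂m : Measurable X₂)
    (hindep : iIndepFun ![W, X₁, X₂] μ)
    (hW : Measure.map W μ = betaMeasure' (n₁ + m₁) (n₂ + m₂))
    (hX₁ : Measure.map X₁ μ = betaMeasure' n₁ m₁)
    (hX₂ : Measure.map X₂ μ = betaMeasure' n₂ m₂) :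
    Measure.map (fun ω => W ω * X₁ ω + (1 - W ω) * X₂ ω) μ =
      betaMeasure' (n₁ + n₂) (m₁ + m₂) := by
  simp only [betaMeasure'_eq_betaMeasure] at hW hX₁ hX₂ ⊢
  have := isProbabilityMeasureBeta (add_pos hn₁ hn₂) (add_pos hm₁ hm₂)
  have hT : Measurable fun ω => W ω * X₁ ω + (1 - W ω) * X₂ ω := by fun_prop
  have := Measure.isProbabilityMeasure_map (μ := μ) hT.aemeasurable
  have hW01 : ∀ᵐ x ∂μ.map W, x ∈ Icc 0 1 := hW ▸ ae_mem_Icc_betaMeasure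
  have hX₁01 : ∀ᵐ x ∂μ.map X₁, x ∈ Icc 0 1 := hX₁ ▸ ae_mem_Icc_betaMeasure
  have hX₂01 : ∀ᵐ x ∂μ.map X₂, x ∈ Icc 0 1 := hX₂ ▸ ae_mem_Icc_betaMeasure
  have hT01 : ∀ᵐ x ∂μ.map fun ω => W ω * X₁ ω + (1 - W ω) * X₂ ω, x ∈ Icc 0 1 := by
    rw [ae_map_iff hT.aemeasurable (p := (· ∈ Icc 0 1)) measurableSet_Icc]
    filter_upwards [ae_of_ae_map hWm.aemeasurable hW01, ae_of_ae_map hX₁m.aemeasurable hX₁01,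
      ae_of_ae_map hX₂m.aemeasurable hX₂01] with ω hw hx₁ hx₂
    simpa using convex_Icc (0 : ℝ) 1 hx₁ hx₂ hw.1 (sub_nonneg.mpr hw.2) (add_sub_cancel _ _)
  refine ext_of_integral_pow_eq hT01 ae_mem_Icc_betaMeasure fun k => ?_
  rw [integral_map hT.aemeasurable (by fun_prop),
    integral_mul_add_one_sub_mul_pow hindep hWm hX₁m hX₂m hW01 hX₁01 hX₂01, hW, hX₁, hX₂,
    ← integral_pow_betaMeasure_add_eq_sum hn₁ hm₁ hn₂ hm₂]
end

section
/- If W ∼ Beta(2,2) is independent of X_1, X_2 which are independent Uniform(0,1) random variables, then W X_1 + (1 − W) X_2 has the Beta(2,2) distribution, with density 6x(1−x) on (0,1). -/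
open MeasureTheory ProbabilityTheory Real Set

/-! Compare characteristic functions. Conditionally on `W = w`, the characteristic function
of `W X₁ + (1 - W) X₂` at `t` is `φ(w t) φ((1 - w) t)`, where `φ(s) = (e^{is} - 1) / (is)` is
that of the uniform law. Integrating against the density `6 w (1 - w)` cancels both
denominators `w t` and `(1 - w) t`, leaving an elementary integral; multiplied by `(it)³`, it
and `∫ 6 x (1 - x) e^{itx} dx` both equal `6 (it (e^{it} + 1) - 2 (e^{it} - 1))`. -/

lemma ProbabilityTheory.iIndepFun.charFun_map_mul_add_one_sub_mul {Ω : Type*}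
    [MeasurableSpace Ω] {μ : Measure Ω} [IsProbabilityMeasure μ] {W X₁ X₂ : Ω → ℝ}
    (hindep : iIndepFun ![W, X₁, X₂] μ) (hW : Measurable W) (hX₁ : Measurable X₁)
    (hX₂ : Measurable X₂) (t : ℝ) :
    charFun (μ.map fun ω => W ω * X₁ ω + (1 - W ω) * X₂ ω) t =
      ∫ w, charFun (μ.map X₁) (w * t) * charFun (μ.map X₂) ((1 - w) * t) ∂μ.map W := by
  have hmeas : ∀ i, Measurable (![W, X₁, X₂] i) := fun i => by fin_cases i <;> assumption
  have hX : IndepFun X₁ X₂ μ := by simpa using hindep.indepFun (i := 1) (j := 2) (by decide)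
  have hWX : IndepFun W (fun ω => (X₁ ω, X₂ ω)) μ :=
    (by simpa using hindep.indepFun_prodMk hmeas 1 2 0 (by decide) (by decide) :
      IndepFun (fun ω => (X₁ ω, X₂ ω)) W μ).symm
  have hlaw : μ.map (fun ω => (W ω, (X₁ ω, X₂ ω))) =
      (μ.map W).prod ((μ.map X₁).prod (μ.map X₂)) := by
    rw [hWX.map_prod_eq_prod_map_map hW.aemeasurable (hX₁.prodMk hX₂).aemeasurable,
      hX.map_prod_eq_prod_map_map hX₁.aemeasurable hX₂.aemeasurable]
  have hcomp : (fun ω => W ω * X₁ ω + (1 - W ω) * X₂ ω) =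
      (fun p : ℝ × ℝ × ℝ => p.1 * p.2.1 + (1 - p.1) * p.2.2) ∘
        (fun ω => (W ω, (X₁ ω, X₂ ω))) := rfl
  rw [hcomp, ← Measure.map_map (by fun_prop) (by fun_prop), hlaw, charFun_apply_real,
    integral_map (by fun_prop) (by fun_prop), integral_prod]
  · congr 1
    funext w
    rw [charFun_apply_real, charFun_apply_real, ← integral_prod_mul]
    congr 1
    funext p
    rw [← Complex.exp_add]
    congr 1
    push_cast
    ring
  · refine (integrable_const (1 : ℝ)).mono' (by fun_prop) (ae_of_all _ fun p => ?_)
    rw [Complex.norm_exp]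
    simp

lemma charFun_volume_restrict_Ioo_mul {a b : ℝ} (hab : a ≤ b) (s : ℝ) :
    charFun (volume.restrict (Ioo a b)) s * (s * Complex.I) =
      Complex.exp (s * b * Complex.I) - Complex.exp (s * a * Complex.I) := by
  rcases eq_or_ne s 0 with rfl | hs
  · simp
  have hsI : (s : ℂ) * Complex.I ≠ 0 := by simp [hs]
  rw [charFun_apply_real, ← integral_Ioc_eq_integral_Ioo, ← intervalIntegral.integral_of_le hab]
  simp_rw [mul_right_comm _ _ Complex.I]
  rw [integral_exp_mul_complex hsI, div_mul_cancel₀ _ hsI]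

lemma betaMeasure'_two_two_eq_withDensity :
    betaMeasure' 2 2 = volume.withDensity fun x => ENNReal.ofReal
      (indicator (Ioo 0 1) (fun x => 6 * x * (1 - x)) x) := by
  have hΓ₂ : Gamma 2 = 1 := by simp
  have hΓ₄ : Gamma (2 + 2) = 6 := by
    rw [show (2 + 2 : ℝ) = (3 : ℕ) + 1 by norm_num, Gamma_nat_eq_factorial]
    simp [Nat.factorial]
  have hpoly : (fun x : ℝ => x ^ (2 - 1 : ℝ) * (1 - x) ^ (2 - 1 : ℝ) /
      (Gamma 2 * Gamma 2 / Gamma (2 + 2))) = fun x => 6 * x * (1 - x) := by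
    funext x
    norm_num [hΓ₂, hΓ₄]
    ring
  rw [betaMeasure', hpoly]

lemma integral_betaMeasure'_two_two {E : Type*} [NormedAddCommGroup E] [NormedSpace ℝ E]
    (f : ℝ → E) :
    ∫ x, f x ∂betaMeasure' 2 2 = ∫ x in 0..1, (6 * x * (1 - x)) • f x := by
  have hdens : Measurable fun x : ℝ =>
      ENNReal.ofReal (indicator (Ioo 0 1) (fun x => 6 * x * (1 - x)) x) :=
    (Measurable.indicator (by fun_prop) measurableSet_Ioo).ennreal_ofReal
  rw [betaMeasure'_two_two_eq_withDensity, integral_withDensity_eq_integral_toReal_smul hdens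
    (ae_of_all _ fun _ => ENNReal.ofReal_lt_top), intervalIntegral.integral_of_le zero_le_one,
    integral_Ioc_eq_integral_Ioo, ← integral_indicator measurableSet_Ioo]
  congr 1
  funext x
  by_cases hx : x ∈ Ioo (0 : ℝ) 1
  · have : 0 ≤ 6 * x * (1 - x) := by nlinarith [hx.1, hx.2]
    simp [hx, ENNReal.toReal_ofReal this]
  · simp [hx]

-- Multiplying by `(it)³` keeps the antiderivatives here and below free of division.
lemma mul_charFun_betaMeasure'_two_two (t : ℝ) :
    (t * Complex.I) ^ 3 * charFun (betaMeasure' 2 2) t =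
      6 * (t * Complex.I * (Complex.exp (t * Complex.I) + 1) -
        2 * (Complex.exp (t * Complex.I) - 1)) := by
  set c : ℂ := t * Complex.I
  have hderiv : ∀ w : ℝ, HasDerivAt
      (fun x : ℝ => Complex.exp (c * x) * (c ^ 2 * x * (1 - x) - c * (1 - 2 * x) - 2))
      (c ^ 3 * (w * (1 - w)) * Complex.exp (c * w)) w := fun w => by
    have hx : HasDerivAt (fun x : ℝ => (x : ℂ)) 1 w := (hasDerivAt_id w).ofReal_comp
    refine (((hx.const_mul c).cexp).mul ((((hx.const_mul (c ^ 2)).mul (hx.const_sub 1)).sub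
      (((hx.const_mul 2).const_sub 1).const_mul c)).sub_const 2)).congr_deriv ?_
    simp only [Pi.mul_apply, Pi.sub_apply]
    ring
  have hintegrand : ∀ w : ℝ, c ^ 3 * ((6 * w * (1 - w)) • Complex.exp (t * w * Complex.I)) =
      6 * (c ^ 3 * (w * (1 - w)) * Complex.exp (c * w)) := fun w => by
    rw [Complex.real_smul, mul_right_comm _ _ Complex.I]
    push_cast
    ring
  rw [charFun_apply_real, integral_betaMeasure'_two_two, ← intervalIntegral.integral_const_mul]
  simp_rw [hintegrand]
  rw [intervalIntegral.integral_const_mul, intervalIntegral.integral_eq_sub_of_hasDerivAt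
    (fun w _ => hderiv w) (Continuous.intervalIntegrable (by fun_prop) 0 1)]
  simp
  ring

lemma mul_integral_charFun_uniform_mul_charFun_uniform (t : ℝ) :
    (t * Complex.I) ^ 3 * ∫ w, charFun (volume.restrict (Ioo (0 : ℝ) 1)) (w * t) *
        charFun (volume.restrict (Ioo (0 : ℝ) 1)) ((1 - w) * t) ∂betaMeasure' 2 2 =
      6 * (t * Complex.I * (Complex.exp (t * Complex.I) + 1) -
        2 * (Complex.exp (t * Complex.I) - 1)) := by
  set c : ℂ := t * Complex.I
  set φ := charFun (volume.restrict (Ioo (0 : ℝ) 1))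
  have hφ : ∀ s : ℝ, φ s * (s * Complex.I) = Complex.exp (s * Complex.I) - 1 := fun s => by
    simpa using charFun_volume_restrict_Ioo_mul zero_le_one s
  have hderiv : ∀ w : ℝ, HasDerivAt
      (fun x : ℝ => c * (Complex.exp c + 1) * x - Complex.exp (c * x) + Complex.exp (c * (1 - x)))
      (c * ((Complex.exp (c * w) - 1) * (Complex.exp (c * (1 - w)) - 1))) w := fun w => by
    have hx : HasDerivAt (fun x : ℝ => (x : ℂ)) 1 w := (hasDerivAt_id w).ofReal_comp
    refine ((((hx.const_mul (c * (Complex.exp c + 1))).sub (hx.const_mul c).cexp)).add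
      ((hx.const_sub 1).const_mul c).cexp).congr_deriv ?_
    rw [mul_sub c 1 (w : ℂ), Complex.exp_sub]
    field_simp
    ring
  have hintegrand : ∀ w : ℝ, c ^ 3 * ((6 * w * (1 - w)) • (φ (w * t) * φ ((1 - w) * t))) =
      6 * (c * ((Complex.exp (c * w) - 1) * (Complex.exp (c * (1 - w)) - 1))) := fun w => by
    calc c ^ 3 * ((6 * w * (1 - w)) • (φ (w * t) * φ ((1 - w) * t)))
        = 6 * c * ((φ (w * t) * ((w * t : ℝ) * Complex.I)) *
            (φ ((1 - w) * t) * (((1 - w) * t : ℝ) * Complex.I))) := by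
          rw [Complex.real_smul]
          push_cast
          ring
      _ = 6 * (c * ((Complex.exp (c * w) - 1) * (Complex.exp (c * (1 - w)) - 1))) := by
          rw [hφ, hφ]
          simp only [c]
          push_cast
          ring_nf
  rw [integral_betaMeasure'_two_two, ← intervalIntegral.integral_const_mul]
  simp_rw [hintegrand]
  rw [intervalIntegral.integral_const_mul, intervalIntegral.integral_eq_sub_of_hasDerivAt
    (fun w _ => hderiv w) (Continuous.intervalIntegrable (by fun_prop) 0 1)]
  simp
  ring

lemma integral_charFun_uniform_mul_charFun_uniform_eq_charFun_betaMeasure' (t : ℝ) :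
    ∫ w, charFun (volume.restrict (Ioo (0 : ℝ) 1)) (w * t) *
        charFun (volume.restrict (Ioo (0 : ℝ) 1)) ((1 - w) * t) ∂betaMeasure' 2 2 =
      charFun (betaMeasure' 2 2) t := by
  rcases eq_or_ne t 0 with rfl | ht
  · simp [integral_const]
  have hc : (t * Complex.I) ^ 3 ≠ 0 := by simp [ht]
  exact mul_left_cancel₀ hc ((mul_integral_charFun_uniform_mul_charFun_uniform t).trans
    (mul_charFun_betaMeasure'_two_two t).symm)

theorem rwa_uniform_beta22 {Ω : Type*} [MeasurableSpace Ω] (μ : Measure Ω)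
    [IsProbabilityMeasure μ]
    (W X₁ X₂ : Ω → ℝ) (hWm : Measurable W) (hX₁m : Measurable X₁)
    (hX₂m : Measurable X₂)
    (hindep : iIndepFun ![W, X₁, X₂] μ)
    (hW : Measure.map W μ = betaMeasure' 2 2)
    (hX₁ : Measure.map X₁ μ = volume.restrict (Set.Ioo (0:ℝ) 1))
    (hX₂ : Measure.map X₂ μ = volume.restrict (Set.Ioo (0:ℝ) 1)) :
    Measure.map (fun ω => W ω * X₁ ω + (1 - W ω) * X₂ ω) μ = betaMeasure' 2 2 ∧
      betaMeasure' 2 2 = volume.withDensity fun x => ENNReal.ofReal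
        (Set.indicator (Set.Ioo 0 1) (fun x => 6 * x * (1 - x)) x) := by
  refine ⟨?_, betaMeasure'_two_two_eq_withDensity⟩
  have : IsFiniteMeasure (betaMeasure' 2 2) := hW ▸ inferInstance
  refine Measure.ext_of_charFun (funext fun t => ?_)
  rw [hindep.charFun_map_mul_add_one_sub_mul hWm hX₁m hX₂m, hW, hX₁, hX₂,
    integral_charFun_uniform_mul_charFun_uniform_eq_charFun_betaMeasure']
end
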